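/- arXiv:1101.1710 — 7 statements merged into one kernel-verified Lean document; each statement's English description precedes it below -/
import Mathlib

section
/- Let b_1, ..., b_n be real numbers with sum of squares equal to 1, and let X_1, ..., X_n be independent uniform random variables on {-1, 1}. Then the expected value of |sum_i b_i X_i| is at least 1/12. -/
/-!
Write `S = ∑ i, b i * ε i` for uniform random signs `ε`. Conditioning on the first sign,
`S = ± b 0 + S'`, and averaging `f (S' + b 0) + f (S' - b 0)` kills the odd powers of `S'`; by
induction on `n` this gives `E S² = ∑ b i²` and `E S⁴ ≤ 3 (∑ b i²)²`. The pointwise bound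
`x² - x⁴ / 4 ≤ |x|` then yields `E |S| ≥ 1 - 3 / 4 ≥ 1 / 12`.
-/

open Finset

lemma sum_fun_fin_succ {α M : Type*} [Fintype α] [AddCommMonoid M] (n : ℕ)
    (f : (Fin (n + 1) → α) → M) :
    ∑ σ, f σ = ∑ c, ∑ τ : Fin n → α, f (Fin.cons c τ) := by
  rw [← Fintype.sum_prod_type']
  exact (Fintype.sum_equiv (Fin.consEquiv fun _ => α) _ _ fun _ => rfl).symm

noncomputable def signSum {n : ℕ} (b : Fin n → ℝ) (σ : Fin n → Bool) : ℝ :=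
  ∑ i, b i * if σ i then 1 else -1

lemma signSum_cons {n : ℕ} (b : Fin (n + 1) → ℝ) (c : Bool) (τ : Fin n → Bool) :
    signSum b (Fin.cons c τ) = b 0 * (if c then 1 else -1) + signSum (Fin.tail b) τ := by
  simp [signSum, Fin.sum_univ_succ, Fin.tail]

lemma sum_comp_signSum_succ {n : ℕ} (b : Fin (n + 1) → ℝ) (f : ℝ → ℝ) :
    ∑ σ, f (signSum b σ) =
      ∑ τ, (f (signSum (Fin.tail b) τ + b 0) + f (signSum (Fin.tail b) τ - b 0)) := by
  rw [sum_fun_fin_succ, Fintype.sum_bool, ← sum_add_distrib]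
  refine sum_congr rfl fun τ _ => ?_
  simp only [signSum_cons, if_true, Bool.false_eq_true, if_false]
  ring_nf

lemma sum_signSum_sq {n : ℕ} (b : Fin n → ℝ) :
    ∑ σ, signSum b σ ^ 2 = 2 ^ n * ∑ i, b i ^ 2 := by
  induction n with
  | zero => simp [signSum]
  | succ n ih =>
    have parallelogram (x : ℝ) : (x + b 0) ^ 2 + (x - b 0) ^ 2 = 2 * x ^ 2 + 2 * b 0 ^ 2 := by
      ring
    simp only [sum_comp_signSum_succ b (· ^ 2), parallelogram, sum_add_distrib, ← mul_sum,
      ih (Fin.tail b), sum_const, card_univ, Fintype.card_fun, Fintype.card_bool, Fintype.card_fin,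
      nsmul_eq_mul, Fin.sum_univ_succ (fun i => b i ^ 2), Fin.tail]
    push_cast
    ring

lemma sum_signSum_pow_four_le {n : ℕ} (b : Fin n → ℝ) :
    ∑ σ, signSum b σ ^ 4 ≤ 3 * 2 ^ n * (∑ i, b i ^ 2) ^ 2 := by
  induction n with
  | zero => simp [signSum]
  | succ n ih =>
    have expand (x : ℝ) :
        (x + b 0) ^ 4 + (x - b 0) ^ 4 = 2 * x ^ 4 + 12 * b 0 ^ 2 * x ^ 2 + 2 * b 0 ^ 4 := by
      ring
    set t := ∑ i, Fin.tail b i ^ 2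
    have ht : 0 ≤ t := by positivity
    have hsum : ∑ i, b i ^ 2 = b 0 ^ 2 + t := Fin.sum_univ_succ _
    calc ∑ σ, signSum b σ ^ 4
        = 2 * ∑ τ, signSum (Fin.tail b) τ ^ 4 + 12 * b 0 ^ 2 * (2 ^ n * t)
            + 2 ^ (n + 1) * b 0 ^ 4 := by
          simp only [sum_comp_signSum_succ b (· ^ 4), expand, sum_add_distrib, ← mul_sum,
            sum_signSum_sq, sum_const, card_univ, Fintype.card_fun, Fintype.card_bool,
            Fintype.card_fin, nsmul_eq_mul]
          push_cast
          ring
      _ ≤ 2 * (3 * 2 ^ n * t ^ 2) + 12 * b 0 ^ 2 * (2 ^ n * t) + 2 ^ (n + 1) * b 0 ^ 4 := by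
          gcongr
          exact ih _
      _ ≤ 3 * 2 ^ (n + 1) * (∑ i, b i ^ 2) ^ 2 := by
          have h2n : (0 : ℝ) ≤ 2 ^ n := by positivity
          rw [hsum, pow_succ (2 : ℝ) n]
          nlinarith [mul_nonneg h2n (pow_nonneg (sq_nonneg (b 0)) 2)]

lemma sq_sub_pow_four_div_four_le_abs (x : ℝ) : x ^ 2 - x ^ 4 / 4 ≤ |x| := by
  rw [← sq_abs x, ← (show Even 4 by decide).pow_abs x]
  nlinarith [abs_nonneg x, sq_nonneg (|x| - 1), sq_nonneg (|x| ^ 2 - 2 * |x|),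
    sq_nonneg (|x| ^ 2 - 2)]

/-- Khintchine-type lower bound: if `∑ i, (b i)^2 = 1`, then the expectation over
uniform sign vectors `σ : Fin n → Bool` of `|∑ i, b i * ±1|` is at least `1/12`. -/
theorem stmt0 (n : ℕ) (b : Fin n → ℝ) (hb : ∑ i, (b i)^2 = 1) :
    (1 : ℝ)/12 ≤ (2^n : ℝ)⁻¹ *
      ∑ σ : Fin n → Bool, |∑ i, b i * (if σ i then 1 else -1)| := by
  change _ ≤ _ * ∑ σ, |signSum b σ|
  have second := sum_signSum_sq b
  have fourth := sum_signSum_pow_four_le b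
  rw [hb, mul_one] at second
  rw [hb, one_pow, mul_one] at fourth
  have pointwise : ∑ σ, (signSum b σ ^ 2 - signSum b σ ^ 4 / 4) ≤ ∑ σ, |signSum b σ| :=
    sum_le_sum fun σ _ => sq_sub_pow_four_div_four_le_abs _
  rw [sum_sub_distrib, ← sum_div, second] at pointwise
  have h2n : (0 : ℝ) < 2 ^ n := by positivity
  rw [inv_mul_eq_div, le_div_iff₀ h2n]
  linarith
end

section
/- For all n > 1 and real numbers x_1, ..., x_n, we have x_1^2 + x_2^2 + ... + x_n^2 >= (1 + 1/n^2) * (x_1 x_2 + x_2 x_3 + ... + x_{n-1} x_n). -/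
open Finset

/-!
If a vector `w` vanishing at both ends of the path `0, 1, …, n + 1` is positive inside and
satisfies `c (w (k - 1) + w (k + 1)) ≤ 2 w k`, then weighting the AM-GM inequality on each edge
`2 x_i x_{i+1} ≤ (w_{i+1}/w_i) x_i² + (w_i/w_{i+1}) x_{i+1}²` by the test vector and summing gives
`c ∑ x_i x_{i+1} ≤ ∑ x_i²`, i.e. `2 / c` bounds the top eigenvalue of the path. The eigenvector
`k ↦ sin (k π / (n + 1))` is replaced by the parabola `k ↦ k (n + 1 - k)`, whose second difference
is the constant `-2`; this is what leaves room for `c = 1 + 1 / n²`.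
-/

lemma two_mul_mul_le_div_mul_sq_add_div_mul_sq {a b : ℝ} (ha : 0 < a) (hb : 0 < b) (x y : ℝ) :
    2 * (x * y) ≤ b / a * x ^ 2 + a / b * y ^ 2 := by
  have key : b / a * x ^ 2 + a / b * y ^ 2 - 2 * (x * y) = (b * x - a * y) ^ 2 / (a * b) := by
    field_simp
    ring
  have : 0 ≤ (b * x - a * y) ^ 2 / (a * b) := by positivity
  linarith

theorem mul_sum_mul_succ_le_sum_sq_of_weight (n : ℕ) {c : ℝ} (hc : 0 ≤ c) {w : ℕ → ℝ}
    (hw_zero : w 0 = 0) (hw_last : w (n + 1) = 0) (hw_pos : ∀ i < n, 0 < w (i + 1))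
    (hw_adj : ∀ i < n, c * (w i + w (i + 2)) ≤ 2 * w (i + 1)) (x : ℕ → ℝ) :
    c * ∑ i ∈ range (n - 1), x i * x (i + 1) ≤ ∑ i ∈ range n, x i ^ 2 := by
  set fwd : ℕ → ℝ := fun j ↦ c / 2 * (w (j + 2) / w (j + 1)) * x j ^ 2
  set bwd : ℕ → ℝ := fun j ↦ c / 2 * (w j / w (j + 1)) * x j ^ 2
  have edge : ∀ i < n - 1, c * (x i * x (i + 1)) ≤ fwd i + bwd (i + 1) := fun i hi ↦ by
    have amgm := two_mul_mul_le_div_mul_sq_add_div_mul_sq (hw_pos i (by omega))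
      (hw_pos (i + 1) (by omega)) (x i) (x (i + 1))
    have := mul_le_mul_of_nonneg_left amgm (by positivity : 0 ≤ c / 2)
    simp only [fwd, bwd]
    linarith
  have sum_fwd : ∑ i ∈ range (n - 1), fwd i = ∑ j ∈ range n, fwd j := by
    cases n with
    | zero => rfl
    | succ m => simp [sum_range_succ _ m, fwd, hw_last]
  have sum_bwd : ∑ i ∈ range (n - 1), bwd (i + 1) = ∑ j ∈ range n, bwd j := by
    cases n with
    | zero => rfl
    | succ m => simp [sum_range_succ' _ m, bwd, hw_zero]
  have vertex : ∀ j < n, fwd j + bwd j ≤ x j ^ 2 := fun j hj ↦ by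
    have hwj := hw_pos j hj
    have : fwd j + bwd j = c * (w j + w (j + 2)) / (2 * w (j + 1)) * x j ^ 2 := by
      simp only [fwd, bwd]
      field_simp
      ring
    rw [this]
    exact mul_le_of_le_one_left (sq_nonneg _) ((div_le_one (by positivity)).2 (hw_adj j hj))
  calc c * ∑ i ∈ range (n - 1), x i * x (i + 1)
      = ∑ i ∈ range (n - 1), c * (x i * x (i + 1)) := mul_sum _ _ _
    _ ≤ ∑ i ∈ range (n - 1), (fwd i + bwd (i + 1)) :=
        sum_le_sum fun i hi ↦ edge i (mem_range.1 hi)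
    _ = ∑ j ∈ range n, (fwd j + bwd j) := by rw [sum_add_distrib, sum_add_distrib, sum_fwd, sum_bwd]
    _ ≤ ∑ j ∈ range n, x j ^ 2 := sum_le_sum fun j hj ↦ vertex j (mem_range.1 hj)

def pathParabola (n k : ℕ) : ℝ := k * (n + 1 - k)

lemma pathParabola_pos {n i : ℕ} (hi : i < n) : 0 < pathParabola n (i + 1) := by
  have : (i : ℝ) + 1 ≤ n := by exact_mod_cast hi
  unfold pathParabola
  push_cast
  nlinarith

lemma pathParabola_add_pathParabola (n i : ℕ) :
    pathParabola n i + pathParabola n (i + 2) = 2 * pathParabola n (i + 1) - 2 := by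
  unfold pathParabola
  push_cast
  ring

lemma pathParabola_le_sq {n i : ℕ} (hi : i < n) : pathParabola n (i + 1) ≤ (n : ℝ) ^ 2 := by
  have : (i : ℝ) + 1 ≤ n := by exact_mod_cast hi
  unfold pathParabola
  push_cast
  nlinarith

lemma one_add_inv_sq_mul_pathParabola_adj_le {n i : ℕ} (hi : i < n) :
    (1 + 1 / (n : ℝ) ^ 2) * (pathParabola n i + pathParabola n (i + 2))
      ≤ 2 * pathParabola n (i + 1) := by
  have hn : (n : ℝ) ≠ 0 := Nat.cast_ne_zero.2 (by omega)
  have hW := pathParabola_le_sq hi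
  rw [pathParabola_add_pathParabola, ← sub_nonneg]
  have gap : 2 * pathParabola n (i + 1) - (1 + 1 / (n : ℝ) ^ 2) * (2 * pathParabola n (i + 1) - 2)
      = 2 * ((n : ℝ) ^ 2 + 1 - pathParabola n (i + 1)) / (n : ℝ) ^ 2 := by
    field_simp
    ring
  rw [gap]
  have : 0 ≤ (n : ℝ) ^ 2 + 1 - pathParabola n (i + 1) := by linarith
  positivity

theorem stmt3_general (n : ℕ) (x : ℕ → ℝ) :
    (1 + 1/(n:ℝ)^2) * ∑ i ∈ Finset.range (n-1), x i * x (i+1)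
      ≤ ∑ i ∈ Finset.range n, (x i)^2 :=
  mul_sum_mul_succ_le_sum_sq_of_weight n (by positivity) (w := pathParabola n)
    (by simp [pathParabola]) (by simp [pathParabola]) (fun _ hi ↦ pathParabola_pos hi)
    (fun _ hi ↦ one_add_inv_sq_mul_pathParabola_adj_le hi) x

/-- For all `n > 1` and reals `x_1,…,x_n`:
`x_1² + ⋯ + x_n² ≥ (1 + 1/n²) (x_1 x_2 + ⋯ + x_{n-1} x_n)`. -/
theorem stmt3 (n : ℕ) (hn : 1 < n) (x : ℕ → ℝ) :
    (1 + 1/(n:ℝ)^2) * ∑ i ∈ Finset.range (n-1), x i * x (i+1)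
      ≤ ∑ i ∈ Finset.range n, (x i)^2 :=
  stmt3_general n x
end

section
/- Let f : {-1,1}^R -> [-1,1] with L1 norm ||f||_1 = E_x[|f(x)|] = delta. Write f = f^{=1} + f^{!=1}, where f^{=1} = sum_i \hat{f}({i}) chi_{{i}} is the linear part of the Fourier expansion and f^{!=1} is the rest. If ||f||_2^2 = E_x[f(x)^2] > (10^4 + 1) * delta^2, then ||f^{!=1}||_2^2 >= delta^2. -/
/-!
Split `f = g + h` with `g = f^{=1}`, so that `𝔼 f² = 𝔼 g² + 𝔼 h²` by Parseval. If `𝔼 h² < δ²`,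
then `𝔼 |h| < δ` and `𝔼 |g| ≤ 𝔼 |f| + 𝔼 |h| < 2δ`. For the linear function `g`, Khintchine's
inequality `𝔼 g⁴ ≤ 3 (𝔼 g²)²` combined with the interpolation `(𝔼 g²)³ ≤ (𝔼 |g|)² 𝔼 g⁴` gives
`𝔼 g² ≤ 3 (𝔼 |g|)² < 12 δ²`, hence `𝔼 f² < 13 δ²`, contradicting `𝔼 f² > (10⁴ + 1) δ²`.
-/

open Finset

/-- The character `χ_S` on the boolean cube `{-1,1}^R` (encoded via `Fin R → Bool`,
with `true ↦ 1` and `false ↦ -1`). -/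
noncomputable def bchi {R : ℕ} (S : Finset (Fin R)) (x : Fin R → Bool) : ℝ :=
  ∏ i ∈ S, (if x i then (1:ℝ) else -1)

/-- The Fourier coefficient `f̂(S) = E_x[f(x) χ_S(x)]` over the uniform measure. -/
noncomputable def bfourier {R : ℕ} (f : (Fin R → Bool) → ℝ) (S : Finset (Fin R)) : ℝ :=
  (2^R : ℝ)⁻¹ * ∑ x : Fin R → Bool, f x * bchi S x

open scoped BigOperators

section Moments

variable {ι : Type*} (s : Finset ι) (g : ι → ℝ)

lemma sq_expect_sq_le_expect_abs_mul_expect_abs_pow_three :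
    (𝔼 i ∈ s, g i ^ 2) ^ 2 ≤ (𝔼 i ∈ s, |g i|) * 𝔼 i ∈ s, |g i| ^ 3 := by
  have hsqrt : ∀ i, √|g i| ^ 2 = |g i| := fun i => Real.sq_sqrt (abs_nonneg _)
  calc (𝔼 i ∈ s, g i ^ 2) ^ 2 = (𝔼 i ∈ s, √|g i| * (√|g i| * |g i|)) ^ 2 := by
        congr 1
        refine expect_congr rfl fun i _ => ?_
        rw [← mul_assoc, ← sq, hsqrt, ← sq_abs (g i)]
        ring
    _ ≤ (𝔼 i ∈ s, √|g i| ^ 2) * 𝔼 i ∈ s, (√|g i| * |g i|) ^ 2 :=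
        expect_mul_sq_le_sq_mul_sq ..
    _ = (𝔼 i ∈ s, |g i|) * 𝔼 i ∈ s, |g i| ^ 3 := by
        congr 1 <;> refine expect_congr rfl fun i _ => ?_
        · exact hsqrt i
        · rw [mul_pow, hsqrt]
          ring

lemma sq_expect_abs_pow_three_le_expect_sq_mul_expect_pow_four :
    (𝔼 i ∈ s, |g i| ^ 3) ^ 2 ≤ (𝔼 i ∈ s, g i ^ 2) * 𝔼 i ∈ s, g i ^ 4 := by
  calc (𝔼 i ∈ s, |g i| ^ 3) ^ 2 = (𝔼 i ∈ s, |g i| * g i ^ 2) ^ 2 := by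
        congr 1
        refine expect_congr rfl fun i _ => ?_
        rw [← sq_abs (g i)]
        ring
    _ ≤ (𝔼 i ∈ s, |g i| ^ 2) * 𝔼 i ∈ s, (g i ^ 2) ^ 2 := expect_mul_sq_le_sq_mul_sq ..
    _ = (𝔼 i ∈ s, g i ^ 2) * 𝔼 i ∈ s, g i ^ 4 := by
        congr 1 <;> refine expect_congr rfl fun i _ => ?_
        · exact sq_abs _
        · ring

theorem expect_sq_pow_three_le :
    (𝔼 i ∈ s, g i ^ 2) ^ 3 ≤ (𝔼 i ∈ s, |g i|) ^ 2 * 𝔼 i ∈ s, g i ^ 4 := by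
  set m₁ := 𝔼 i ∈ s, |g i|
  set m₂ := 𝔼 i ∈ s, g i ^ 2
  set m₃ := 𝔼 i ∈ s, |g i| ^ 3
  set m₄ := 𝔼 i ∈ s, g i ^ 4
  have h₂ : m₂ ^ 2 ≤ m₁ * m₃ := sq_expect_sq_le_expect_abs_mul_expect_abs_pow_three s g
  have h₃ : m₃ ^ 2 ≤ m₂ * m₄ := sq_expect_abs_pow_three_le_expect_sq_mul_expect_pow_four s g
  have hm₂ : 0 ≤ m₂ := expect_nonneg fun i _ => sq_nonneg _
  have hm₄ : 0 ≤ m₄ := expect_nonneg fun i _ => by positivity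
  rcases hm₂.eq_or_lt with hzero | hpos
  · rw [← hzero, zero_pow three_ne_zero]
    positivity
  · refine le_of_mul_le_mul_left ?_ hpos
    calc m₂ * m₂ ^ 3 = (m₂ ^ 2) ^ 2 := by ring
      _ ≤ (m₁ * m₃) ^ 2 := pow_le_pow_left₀ (by positivity) h₂ 2
      _ = m₁ ^ 2 * m₃ ^ 2 := by ring
      _ ≤ m₁ ^ 2 * (m₂ * m₄) := by gcongr
      _ = m₂ * (m₁ ^ 2 * m₄) := by ring

end Moments

theorem sq_expect_abs_le_expect_sq {ι : Type*} [Fintype ι] [Nonempty ι] (g : ι → ℝ) :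
    (𝔼 i, |g i|) ^ 2 ≤ 𝔼 i, g i ^ 2 := by
  simpa [sq_abs] using expect_mul_sq_le_sq_mul_sq univ (fun _ => (1 : ℝ)) fun i => |g i|

noncomputable def boolSign (b : Bool) : ℝ := if b then 1 else -1

@[simp] lemma boolSign_true : boolSign true = 1 := rfl

@[simp] lemma boolSign_false : boolSign false = -1 := rfl

lemma boolSign_mul_self (b : Bool) : boolSign b * boolSign b = 1 := by
  cases b <;> norm_num

section BooleanCube

variable {R : ℕ}

lemma expect_eq_inv_two_pow_mul_sum (F : (Fin R → Bool) → ℝ) :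
    𝔼 x, F x = (2 ^ R : ℝ)⁻¹ * ∑ x, F x := by
  simp [Fintype.expect_eq_sum_div_card, div_eq_inv_mul]

lemma bfourier_eq_expect (f : (Fin R → Bool) → ℝ) (S : Finset (Fin R)) :
    bfourier f S = 𝔼 x, f x * bchi S x :=
  (expect_eq_inv_two_pow_mul_sum _).symm

lemma bchi_singleton (i : Fin R) (x : Fin R → Bool) : bchi {i} x = boolSign (x i) :=
  prod_singleton _ _

lemma bchi_eq_prod_ite (S : Finset (Fin R)) (x : Fin R → Bool) :
    bchi S x = ∏ i, if i ∈ S then boolSign (x i) else 1 :=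
  (Fintype.prod_ite_mem S _).symm

lemma bchi_mul_bchi (S T : Finset (Fin R)) (x : Fin R → Bool) :
    bchi S x * bchi T x = bchi (symmDiff S T) x := by
  rw [bchi_eq_prod_ite, bchi_eq_prod_ite, bchi_eq_prod_ite, ← prod_mul_distrib]
  refine prod_congr rfl fun i _ => ?_
  by_cases hS : i ∈ S <;> by_cases hT : i ∈ T <;> simp [hS, hT, mem_symmDiff, boolSign_mul_self]

lemma expect_bchi (S : Finset (Fin R)) : 𝔼 x, bchi S x = if S = ∅ then 1 else 0 := by
  have hsum : ∑ x : Fin R → Bool, bchi S x = ∏ i : Fin R, if i ∈ S then 0 else 2 := by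
    simp_rw [bchi_eq_prod_ite]
    rw [← Fintype.prod_sum (fun i (b : Bool) => if i ∈ S then boolSign b else 1)]
    refine prod_congr rfl fun i _ => ?_
    rw [Fintype.sum_bool]
    split_ifs <;> norm_num
  rw [expect_eq_inv_two_pow_mul_sum, hsum]
  split_ifs with hS
  · simp [hS]
  · obtain ⟨i, hi⟩ := nonempty_iff_ne_empty.mpr hS
    rw [prod_eq_zero (mem_univ i) (by simp [hi]), mul_zero]

lemma expect_bchi_mul_bchi (S T : Finset (Fin R)) :
    𝔼 x, bchi S x * bchi T x = if S = T then 1 else 0 := by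
  simp_rw [bchi_mul_bchi, expect_bchi, symmDiff_eq_empty]

lemma sum_bchi_mul_bchi (x y : Fin R → Bool) :
    ∑ S, bchi S x * bchi S y = if x = y then 2 ^ R else 0 := by
  have hprod : ∑ S, bchi S x * bchi S y = ∏ i, (1 + boolSign (x i) * boolSign (y i)) := by
    rw [prod_one_add, powerset_univ]
    simp_rw [bchi, ← prod_mul_distrib]
    rfl
  rw [hprod]
  split_ifs with hxy
  · simp only [hxy, boolSign_mul_self, prod_const, card_univ, Fintype.card_fin]
    norm_num
  · obtain ⟨i, hi⟩ := Function.ne_iff.mp hxy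
    refine prod_eq_zero (mem_univ i) ?_
    cases hx : x i <;> cases hy : y i <;> simp_all

theorem bfourier_inversion (f : (Fin R → Bool) → ℝ) (x : Fin R → Bool) :
    ∑ S, bfourier f S * bchi S x = f x := by
  simp_rw [bfourier_eq_expect, expect_mul, ← expect_sum_comm, mul_assoc, ← mul_sum, mul_comm (f _),
    sum_bchi_mul_bchi]
  have hcard : (Fintype.card (Fin R → Bool) : ℝ) = 2 ^ R := by simp
  rw [← hcard]
  exact expect_boole_mul' f x

theorem expect_sq_sum_bchi {ι : Type*} (K : Finset ι) (e : ι → Finset (Fin R))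
    (he : Set.InjOn e K) (c : ι → ℝ) :
    𝔼 x, (∑ k ∈ K, c k * bchi (e k) x) ^ 2 = ∑ k ∈ K, c k ^ 2 := by
  simp_rw [sq, sum_mul_sum, expect_sum_comm, mul_mul_mul_comm _ (bchi _ _), ← mul_expect,
    expect_bchi_mul_bchi]
  refine sum_congr rfl fun k hk => ?_
  rw [sum_eq_single_of_mem k hk fun l hl hlk => by simp [he.ne hk hl hlk.symm]]
  simp

theorem parseval (f : (Fin R → Bool) → ℝ) : 𝔼 x, f x ^ 2 = ∑ S, bfourier f S ^ 2 := by
  calc 𝔼 x, f x ^ 2 = 𝔼 x, (∑ S, bfourier f S * bchi S x) ^ 2 := by simp only [bfourier_inversion]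
    _ = ∑ S, bfourier f S ^ 2 := expect_sq_sum_bchi univ id (Set.injOn_id _) _

noncomputable def linearForm (a : Fin R → ℝ) (x : Fin R → Bool) : ℝ :=
  ∑ i, a i * boolSign (x i)

lemma linearForm_cons (a : Fin (R + 1) → ℝ) (b : Bool) (y : Fin R → Bool) :
    linearForm a (Fin.cons b y) = a 0 * boolSign b + linearForm (fun i => a i.succ) y := by
  simp [linearForm, Fin.sum_univ_succ]

lemma expect_linearForm_sq (a : Fin R → ℝ) : 𝔼 x, linearForm a x ^ 2 = ∑ i, a i ^ 2 := by
  simpa only [linearForm, bchi_singleton] using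
    expect_sq_sum_bchi univ (fun i => {i}) singleton_injective.injOn a

lemma expect_cube_succ (G : (Fin (R + 1) → Bool) → ℝ) :
    𝔼 x, G x = 𝔼 y, (G (Fin.cons true y) + G (Fin.cons false y)) / 2 := by
  have hsum : ∑ x, G x = ∑ y : Fin R → Bool, (G (Fin.cons true y) + G (Fin.cons false y)) := by
    rw [← Fintype.sum_equiv (Fin.consEquiv fun _ => Bool) (fun p => G (Fin.cons p.1 p.2)) G
      fun _ => rfl, Fintype.sum_prod_type, Fintype.sum_bool, sum_add_distrib]
  rw [expect_eq_inv_two_pow_mul_sum, expect_eq_inv_two_pow_mul_sum, hsum, ← sum_div, pow_succ]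
  ring

theorem expect_linearForm_pow_four_le (a : Fin R → ℝ) :
    𝔼 x, linearForm a x ^ 4 ≤ 3 * (∑ i, a i ^ 2) ^ 2 := by
  induction R with
  | zero => simp [linearForm]
  | succ R ih =>
    -- averaging over the first coordinate kills the odd powers of `a 0`
    have hstep : ∀ c L : ℝ, ((c * 1 + L) ^ 4 + (c * -1 + L) ^ 4) / 2
        = L ^ 4 + 6 * c ^ 2 * L ^ 2 + c ^ 4 := fun c L => by ring
    rw [expect_cube_succ]
    simp only [linearForm_cons, boolSign_true, boolSign_false, hstep]
    rw [expect_add_distrib, expect_add_distrib, ← mul_expect, Fintype.expect_const,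
      expect_linearForm_sq, Fin.sum_univ_succ]
    nlinarith [ih fun i => a i.succ, sq_nonneg (a 0 ^ 2)]

theorem expect_linearForm_sq_le (a : Fin R → ℝ) :
    𝔼 x, linearForm a x ^ 2 ≤ 3 * (𝔼 x, |linearForm a x|) ^ 2 := by
  set m₁ := 𝔼 x, |linearForm a x|
  set m₂ := 𝔼 x, linearForm a x ^ 2 with hm₂
  have hm₄ : 𝔼 x, linearForm a x ^ 4 ≤ 3 * m₂ ^ 2 := by
    rw [hm₂, expect_linearForm_sq]
    exact expect_linearForm_pow_four_le a
  have hinterp : m₂ ^ 3 ≤ m₁ ^ 2 * 𝔼 x, linearForm a x ^ 4 := expect_sq_pow_three_le _ _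
  have hm₂₀ : 0 ≤ m₂ := expect_nonneg fun x _ => sq_nonneg _
  rcases hm₂₀.eq_or_lt with hzero | hpos
  · rw [← hzero]
    positivity
  · refine le_of_mul_le_mul_right ?_ (pow_pos hpos 2)
    calc m₂ * m₂ ^ 2 = m₂ ^ 3 := by ring
      _ ≤ m₁ ^ 2 * (3 * m₂ ^ 2) := hinterp.trans (by gcongr)
      _ = 3 * m₁ ^ 2 * m₂ ^ 2 := by ring

/-- The level-one part `f^{=1}` of `f`. -/
noncomputable def linearPart (f : (Fin R → Bool) → ℝ) : (Fin R → Bool) → ℝ :=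
  linearForm fun i => bfourier f {i}

lemma sum_filter_card_eq_one (F : Finset (Fin R) → ℝ) :
    ∑ S with S.card = 1, F S = ∑ i, F {i} := by
  rw [← powerset_univ, ← powersetCard_eq_filter, powersetCard_one, sum_map]
  rfl

lemma linearPart_add_sum_bchi (f : (Fin R → Bool) → ℝ) (x : Fin R → Bool) :
    linearPart f x + ∑ S with S.card ≠ 1, bfourier f S * bchi S x = f x := by
  rw [← bfourier_inversion f x, ← sum_filter_add_sum_filter_not univ (fun S => S.card = 1),
    sum_filter_card_eq_one]
  simp [linearPart, linearForm, bchi_singleton]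

lemma expect_sq_sub_linearPart (f : (Fin R → Bool) → ℝ) :
    𝔼 x, (f x - linearPart f x) ^ 2 = ∑ S with S.card ≠ 1, bfourier f S ^ 2 := by
  simp_rw [← linearPart_add_sum_bchi f, add_sub_cancel_left]
  exact expect_sq_sum_bchi _ id (Set.injOn_id _) _

lemma expect_sq_eq_expect_sq_linearPart_add (f : (Fin R → Bool) → ℝ) :
    𝔼 x, f x ^ 2 = 𝔼 x, linearPart f x ^ 2 + 𝔼 x, (f x - linearPart f x) ^ 2 := by
  rw [parseval, expect_sq_sub_linearPart, linearPart, expect_linearForm_sq,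
    ← sum_filter_card_eq_one (fun S => bfourier f S ^ 2), sum_filter_add_sum_filter_not]

end BooleanCube

theorem stmt5_general (R : ℕ) (f : (Fin R → Bool) → ℝ) (δ : ℝ)
    (hδ : (2^R : ℝ)⁻¹ * ∑ x : Fin R → Bool, |f x| = δ)
    (h2 : (10^4 + 1) * δ^2 < (2^R : ℝ)⁻¹ * ∑ x : Fin R → Bool, (f x)^2) :
    δ^2 ≤ ∑ S ∈ Finset.univ.filter (fun S : Finset (Fin R) => S.card ≠ 1),
      (bfourier f S)^2 := by
  rw [← expect_eq_inv_two_pow_mul_sum] at hδ h2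
  rw [← expect_sq_sub_linearPart]
  set g := linearPart f
  set m := 𝔼 x, |f x - g x|
  have hg : 𝔼 x, g x ^ 2 ≤ 3 * (δ + m) ^ 2 := by
    have htri : 𝔼 x, |g x| ≤ δ + m := by
      rw [← hδ, ← expect_add_distrib]
      exact expect_le_expect fun x _ => by simpa using abs_sub (f x) (f x - g x)
    calc 𝔼 x, g x ^ 2 ≤ 3 * (𝔼 x, |g x|) ^ 2 := expect_linearForm_sq_le _
      _ ≤ 3 * (δ + m) ^ 2 := by gcongr
  have hm : m ^ 2 ≤ 𝔼 x, (f x - g x) ^ 2 := sq_expect_abs_le_expect_sq _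
  have hδ₀ : 0 ≤ δ := hδ ▸ expect_nonneg fun x _ => abs_nonneg _
  rw [expect_sq_eq_expect_sq_linearPart_add] at h2
  by_contra! hlt
  have hmδ : m < δ := lt_of_pow_lt_pow_left₀ 2 hδ₀ (hm.trans_lt hlt)
  have hm₀ : 0 ≤ m := expect_nonneg fun x _ => abs_nonneg _
  have hg₁₂ : 𝔼 x, g x ^ 2 < 12 * δ ^ 2 := hg.trans_lt (by nlinarith)
  nlinarith

/-- If `f : {-1,1}^R → [-1,1]` has `‖f‖₁ = δ` and `‖f‖₂² > (10⁴+1) δ²`, then the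
non-linear Fourier mass satisfies `‖f^{≠1}‖₂² ≥ δ²`. -/
theorem stmt5 (R : ℕ) (f : (Fin R → Bool) → ℝ) (hf : ∀ x, |f x| ≤ 1) (δ : ℝ)
    (hδ : (2^R : ℝ)⁻¹ * ∑ x : Fin R → Bool, |f x| = δ)
    (h2 : (10^4 + 1) * δ^2 < (2^R : ℝ)⁻¹ * ∑ x : Fin R → Bool, (f x)^2) :
    δ^2 ≤ ∑ S ∈ Finset.univ.filter (fun S : Finset (Fin R) => S.card ≠ 1),
      (bfourier f S)^2 :=
  stmt5_general R f δ hδ h2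
end

section
/- Let gamma_1, ..., gamma_m be real numbers in [0,1], not all zero, let M >= 2 and epsilon = 1/M, with m large. Then (- sum_{i=1}^m gamma_i^2 M^{2i} + (1+2*epsilon) * sum_{i=1}^{m-1} gamma_i gamma_{i+1} M^{2i+1}) / (sum_{i=1}^m gamma_i M^{2i}) < 1 / M^{sqrt(m)/4}. -/
/-!
Write `x i = γ i * M ^ i`, so that `0 ≤ x i ≤ M ^ i`, the numerator is
`c ∑ x i x (i+1) - ∑ x i ^ 2` with `c = 1 + 2/M`, and the denominator is `D = ∑ x i M ^ i`.
On a path of length `L` the form `∑ x i x (i+1)` is at most `(1 - 4/(L+1)^2) ∑ x i ^ 2`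
(weighted AM-GM with the tent weights `(k+1)(L-k)`), so for `L ≈ √(2M)` the numerator
restricted to a window of length `L` is nonpositive. Place the window where `M ^ (2i) ≈ D`:
to its left the box constraint `x i ≤ M ^ i`, and to its right the bound `x i M ^ i ≤ D`,
make the cross terms geometrically small, of total size `O(M ^ (-2B) D)` for a window of
length `2B + 2`, and `M ^ (-2B) ≤ M ^ (-√(2M)/4)` once `8B ≥ √(2M)`.
For `M ≤ 9` the constants are checked directly.
-/

open Finset

def tentWeight (n k : ℕ) : ℝ := (k + 1) * (n + 1 - k)

lemma mul_le_weighted_sq {a b : ℝ} (ha : 0 < a) (hb : 0 < b) (y z : ℝ) :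
    y * z ≤ b / (2 * a) * y ^ 2 + a / (2 * b) * z ^ 2 := by
  rw [div_mul_eq_mul_div, div_mul_eq_mul_div, div_add_div _ _ (by positivity) (by positivity),
    le_div_iff₀ (by positivity)]
  nlinarith [sq_nonneg (b * y - a * z)]

lemma sum_mul_succ_le_tentWeight (y : ℕ → ℝ) (n : ℕ) :
    ∑ k ∈ range n, y k * y (k + 1) ≤ ∑ k ∈ range (n + 1), (1 - 1 / tentWeight n k) * y k ^ 2 := by
  have hpos : ∀ k < n + 1, 0 < tentWeight n k := fun k hk => by
    have : (k : ℝ) < n + 1 := by exact_mod_cast hk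
    unfold tentWeight; nlinarith
  -- Extended to `ℤ`, `f = tentWeight n` vanishes at `-1` and `n + 1`, and
  -- `f (k - 1) + f (k + 1) = 2 f k - 2`; `down k` is `f (k - 1) / (2 f k)`.
  let up : ℕ → ℝ := fun k => tentWeight n (k + 1) / (2 * tentWeight n k)
  let down : ℕ → ℝ := fun k => k * (n + 2 - k) / (2 * tentWeight n k)
  have hedge : ∀ k ∈ range n, y k * y (k + 1) ≤ up k * y k ^ 2 + down (k + 1) * y (k + 1) ^ 2 := by
    intro k hk
    have hk := mem_range.1 hk
    have hdown : down (k + 1) = tentWeight n k / (2 * tentWeight n (k + 1)) := by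
      simp only [down, tentWeight]; push_cast; ring
    rw [hdown]
    exact mul_le_weighted_sq (hpos k (by omega)) (hpos (k + 1) (by omega)) _ _
  have hup : up n = 0 := by simp [up, tentWeight]
  have hdown : down 0 = 0 := by simp [down]
  calc ∑ k ∈ range n, y k * y (k + 1)
      ≤ ∑ k ∈ range n, (up k * y k ^ 2 + down (k + 1) * y (k + 1) ^ 2) := sum_le_sum hedge
    _ = ∑ k ∈ range (n + 1), up k * y k ^ 2 + ∑ k ∈ range (n + 1), down k * y k ^ 2 := by
      rw [sum_add_distrib, sum_range_succ (fun k => up k * y k ^ 2),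
        sum_range_succ' (fun k => down k * y k ^ 2), hup, hdown]
      ring
    _ = ∑ k ∈ range (n + 1), (1 - 1 / tentWeight n k) * y k ^ 2 := by
      rw [← sum_add_distrib]
      refine sum_congr rfl fun k hk => ?_
      have hk : (k : ℝ) < n + 1 := by exact_mod_cast mem_range.1 hk
      have h1 : (k : ℝ) + 1 ≠ 0 := by positivity
      have h2 : (n : ℝ) + 1 - k ≠ 0 := by linarith
      simp only [up, down, tentWeight]
      field_simp
      push_cast
      ring

lemma tentWeight_le (B k : ℕ) : tentWeight (2 * B + 1) k ≤ (B + 1) * (B + 2) := by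
  unfold tentWeight
  push_cast
  rcases le_or_gt k B with h | h
  · have h' : (k : ℝ) ≤ B := by exact_mod_cast h
    nlinarith
  · have h' : (B : ℝ) + 1 ≤ k := by exact_mod_cast h
    nlinarith

lemma window_quadForm_le {c : ℝ} (hc : 0 ≤ c) (B : ℕ) (y : ℕ → ℝ) :
    c * ∑ k ∈ range (2 * B + 1), y k * y (k + 1) - ∑ k ∈ range (2 * B + 2), y k ^ 2 ≤
      (c * (1 - 1 / ((B + 1) * (B + 2))) - 1) * ∑ k ∈ range (2 * B + 2), y k ^ 2 := by
  have hcoef : ∀ k ∈ range (2 * B + 2),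
      1 - 1 / tentWeight (2 * B + 1) k ≤ 1 - 1 / ((B + 1) * (B + 2)) := by
    intro k hk
    have hk : (k : ℝ) < 2 * B + 2 := by exact_mod_cast mem_range.1 hk
    have hpos : 0 < tentWeight (2 * B + 1) k := by unfold tentWeight; push_cast; nlinarith
    gcongr
    exact tentWeight_le B k
  have hpath : ∑ k ∈ range (2 * B + 1), y k * y (k + 1) ≤
      ∑ k ∈ range (2 * B + 2), (1 - 1 / ((B + 1) * (B + 2))) * y k ^ 2 :=
    (sum_mul_succ_le_tentWeight y _).trans
      (sum_le_sum fun k hk => mul_le_mul_of_nonneg_right (hcoef k hk) (sq_nonneg _))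
  rw [← mul_sum] at hpath
  have := mul_le_mul_of_nonneg_left hpath hc
  linarith

lemma sum_range_mul_succ_le_of_le_pow {M D : ℝ} (hM : 1 < M) {x : ℕ → ℝ} (hx0 : ∀ i, 0 ≤ x i)
    (hxM : ∀ i, x i ≤ M ^ i) {B s : ℕ} (hs : M ^ (2 * (s + B)) ≤ D) :
    ∑ i ∈ range s, x i * x (i + 1) ≤ M * D / ((M ^ 2 - 1) * M ^ (2 * B)) := by
  have hM2 : 0 < M ^ 2 - 1 := by nlinarith
  have hterm : ∀ i, x i * x (i + 1) ≤ M * (M ^ 2) ^ i := fun i => by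
    calc x i * x (i + 1) ≤ M ^ i * M ^ (i + 1) :=
          mul_le_mul (hxM i) (hxM (i + 1)) (hx0 _) (by positivity)
      _ = M * (M ^ 2) ^ i := by ring
  calc ∑ i ∈ range s, x i * x (i + 1) ≤ ∑ i ∈ range s, M * (M ^ 2) ^ i :=
        sum_le_sum fun i _ => hterm i
    _ = M * ((M ^ 2) ^ s - 1) / (M ^ 2 - 1) := by
      rw [← mul_sum, geom_sum_eq (by nlinarith), mul_div_assoc]
    _ ≤ M * (M ^ 2) ^ s / (M ^ 2 - 1) := by gcongr; linarith
    _ ≤ M * D / ((M ^ 2 - 1) * M ^ (2 * B)) := by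
      rw [div_le_div_iff₀ hM2 (by positivity)]
      calc M * (M ^ 2) ^ s * ((M ^ 2 - 1) * M ^ (2 * B)) = M * M ^ (2 * (s + B)) * (M ^ 2 - 1) := by
            ring
        _ ≤ M * D * (M ^ 2 - 1) := by gcongr

lemma sum_range_mul_succ_le_of_mul_pow_le {M D : ℝ} (hM : 1 < M) {x : ℕ → ℝ}
    (hx0 : ∀ i, 0 ≤ x i) (hxD : ∀ i, x i * M ^ i ≤ D) {B s : ℕ} (hD : D ≤ M ^ (2 * (s + B + 1)))
    (t : ℕ) :
    ∑ k ∈ range t, x (s + (2 * B + 1) + k) * x (s + (2 * B + 1) + k + 1) ≤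
      M * D / ((M ^ 2 - 1) * M ^ (2 * B)) := by
  have hM0 : 0 < M := by linarith
  have hM2 : 0 < M ^ 2 - 1 := by nlinarith
  have hD0 : 0 ≤ D := (mul_nonneg (hx0 0) (by positivity)).trans (hxD 0)
  set R := s + (2 * B + 1)
  set r := (M ^ 2)⁻¹ with hr
  have hxle : ∀ i, x i ≤ D / M ^ i := fun i => (le_div_iff₀ (by positivity)).2 (hxD i)
  have hterm : ∀ k, x (R + k) * x (R + k + 1) ≤ D ^ 2 / M ^ (2 * R + 1) * r ^ k := fun k => by
    calc x (R + k) * x (R + k + 1) ≤ D / M ^ (R + k) * (D / M ^ (R + k + 1)) :=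
          mul_le_mul (hxle _) (hxle _) (hx0 _) (by positivity)
      _ = D ^ 2 / M ^ (2 * R + 1) * r ^ k := by
        rw [hr, inv_pow, ← pow_mul]; field_simp; ring
  calc ∑ k ∈ range t, x (R + k) * x (R + k + 1)
      ≤ ∑ k ∈ range t, D ^ 2 / M ^ (2 * R + 1) * r ^ k := sum_le_sum fun k _ => hterm k
    _ ≤ D ^ 2 / M ^ (2 * R + 1) * (r ^ 0 / (1 - r)) := by
      rw [← mul_sum, range_eq_Ico]
      gcongr
      exact geom_sum_Ico_le_of_lt_one (by positivity) (inv_lt_one_of_one_lt₀ (by nlinarith))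
    _ = D ^ 2 * M / ((M ^ 2 - 1) * M ^ (2 * R)) := by
      rw [hr]; field_simp; ring
    _ ≤ M * D / ((M ^ 2 - 1) * M ^ (2 * B)) := by
      rw [div_le_div_iff₀ (by positivity) (by positivity)]
      calc D ^ 2 * M * ((M ^ 2 - 1) * M ^ (2 * B))
          = D * M * (M ^ 2 - 1) * (D * M ^ (2 * B)) := by ring
        _ ≤ D * M * (M ^ 2 - 1) * (M ^ (2 * (s + B + 1)) * M ^ (2 * B)) := by gcongr
        _ = M * D * ((M ^ 2 - 1) * M ^ (2 * R)) := by ring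

lemma sum_range_eq_add_add {f : ℕ → ℝ} {n : ℕ} (hf : ∀ i ≥ n, f i = 0) (a b : ℕ) :
    ∑ i ∈ range n, f i =
      ∑ i ∈ range a, f i + ∑ k ∈ range b, f (a + k) + ∑ k ∈ range n, f (a + b + k) := by
  rw [← sum_range_add, ← sum_range_add]
  exact (eventually_constant_sum hf (by omega)).symm

lemma exists_window_start {M : ℝ} (hM : 1 < M) (B : ℕ) (D : ℝ) :
    ∃ s : ℕ, D ≤ M ^ (2 * (s + B + 1)) ∧ (s = 0 ∨ M ^ (2 * (s + B)) ≤ D) := by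
  have hex : ∃ s : ℕ, D ≤ M ^ (2 * (s + B + 1)) := by
    obtain ⟨s, hs⟩ := pow_unbounded_of_one_lt D hM
    exact ⟨s, hs.le.trans (pow_le_pow_right₀ hM.le (by omega))⟩
  refine ⟨Nat.find hex, Nat.find_spec hex, ?_⟩
  rcases Nat.eq_zero_or_pos (Nat.find hex) with h | h
  · exact .inl h
  · have hmin := Nat.find_min hex (Nat.sub_one_lt_of_lt h)
    rw [show Nat.find hex - 1 + B + 1 = Nat.find hex + B by omega] at hmin
    exact .inr (not_le.1 hmin).le

-- two geometric tails outside the window, and the excess of the quadratic form on it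
noncomputable def gainBound (M c : ℝ) (B : ℕ) : ℝ :=
  2 * c * M / ((M ^ 2 - 1) * M ^ (2 * B)) + max (c * (1 - 1 / ((B + 1) * (B + 2))) - 1) 0

lemma quadForm_le_of_mem_box {M c : ℝ} (hM : 1 < M) (hc : 0 ≤ c) (B n : ℕ) {x : ℕ → ℝ}
    (hx0 : ∀ i, 0 ≤ x i) (hxM : ∀ i, x i ≤ M ^ i) (hxn : ∀ i ≥ n, x i = 0) :
    c * ∑ i ∈ range n, x i * x (i + 1) - ∑ i ∈ range n, x i ^ 2 ≤
      gainBound M c B * ∑ i ∈ range n, x i * M ^ i := by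
  set D := ∑ i ∈ range n, x i * M ^ i
  have hD0 : 0 ≤ D := sum_nonneg fun i _ => mul_nonneg (hx0 i) (by positivity)
  have hxD : ∀ i, x i * M ^ i ≤ D := fun i => by
    by_cases hi : i < n
    · exact single_le_sum (fun j _ => mul_nonneg (hx0 j) (by positivity)) (mem_range.2 hi)
    · rw [hxn i (by omega), zero_mul]; exact hD0
  obtain ⟨s, hsD, hs⟩ := exists_window_start hM B D
  have hE := sum_range_eq_add_add (f := fun i => x i * x (i + 1))
    (fun i hi => by rw [hxn i hi, zero_mul]) s (2 * B + 1)
  have hQ := sum_range_eq_add_add (f := fun i => x i ^ 2)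
    (fun i hi => by rw [hxn i hi, zero_pow two_ne_zero]) s (2 * B + 2)
  have hQD : ∑ i ∈ range n, x i ^ 2 ≤ D :=
    sum_le_sum fun i _ => by rw [sq]; exact mul_le_mul_of_nonneg_left (hxM i) (hx0 i)
  have hQL : 0 ≤ ∑ i ∈ range s, x i ^ 2 := sum_nonneg fun i _ => sq_nonneg _
  have hQ0 : ∀ t u, 0 ≤ ∑ k ∈ range t, x (u + k) ^ 2 := fun t u =>
    sum_nonneg fun i _ => sq_nonneg _
  set t := M * D / ((M ^ 2 - 1) * M ^ (2 * B))
  have hleft : ∑ i ∈ range s, x i * x (i + 1) ≤ t := by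
    rcases hs with rfl | hs
    · rw [sum_range_zero]
      have : 0 < M ^ 2 - 1 := by nlinarith
      positivity
    exact sum_range_mul_succ_le_of_le_pow hM hx0 hxM hs
  have hright := sum_range_mul_succ_le_of_mul_pow_le hM hx0 hxD hsD n
  set κ := c * (1 - 1 / ((B + 1) * (B + 2))) - 1
  have hwindow := window_quadForm_le hc B (fun k => x (s + k))
  simp only [← add_assoc] at hwindow
  have hκ : κ * ∑ k ∈ range (2 * B + 2), x (s + k) ^ 2 ≤ max κ 0 * D :=
    calc κ * ∑ k ∈ range (2 * B + 2), x (s + k) ^ 2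
        ≤ max κ 0 * ∑ k ∈ range (2 * B + 2), x (s + k) ^ 2 :=
          mul_le_mul_of_nonneg_right (le_max_left _ _) (hQ0 _ _)
      _ ≤ max κ 0 * D :=
          mul_le_mul_of_nonneg_left (by linarith [hQ0 n (s + (2 * B + 2))]) (le_max_right _ _)
  have hbound : gainBound M c B * D = 2 * c * t + max κ 0 * D := by
    simp only [gainBound, t, κ]; ring
  rw [hE, hQ, hbound]
  linarith [hQ0 n (s + (2 * B + 2)), mul_le_mul_of_nonneg_left hleft hc,
    mul_le_mul_of_nonneg_left hright hc]

def gainNumerator (M c : ℝ) (m : ℕ) (γ : ℕ → ℝ) : ℝ :=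
  -(∑ i ∈ Icc 1 m, γ i ^ 2 * M ^ (2 * i)) +
    c * ∑ i ∈ Icc 1 (m - 1), γ i * γ (i + 1) * M ^ (2 * i + 1)

def gainDenominator (M : ℝ) (m : ℕ) (γ : ℕ → ℝ) : ℝ := ∑ i ∈ Icc 1 m, γ i * M ^ (2 * i)

lemma gainNumerator_le {M c : ℝ} (hM : 1 < M) (hc : 0 ≤ c) (B : ℕ) {m : ℕ} {γ : ℕ → ℝ}
    (hγ : ∀ i ∈ Icc 1 m, 0 ≤ γ i ∧ γ i ≤ 1) :
    gainNumerator M c m γ ≤ gainBound M c B * gainDenominator M m γ := by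
  set x : ℕ → ℝ := fun i => if i ∈ Icc 1 m then γ i * M ^ i else 0
  have hx : ∀ i ∈ Icc 1 m, x i = γ i * M ^ i := fun i hi => if_pos hi
  have hx' : ∀ i ∉ Icc 1 m, x i = 0 := fun i hi => if_neg hi
  have hsub : ∀ {f : ℕ → ℝ} {k : ℕ}, (∀ i, i ∉ Icc 1 k → f i = 0) → k ≤ m →
      ∑ i ∈ range (m + 1), f i = ∑ i ∈ Icc 1 k, f i := fun hf hk =>
    (sum_subset (fun i hi => by simp only [mem_Icc, mem_range] at hi ⊢; omega)
      fun i _ hi => hf i hi).symm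
  have hE : ∑ i ∈ range (m + 1), x i * x (i + 1) =
      ∑ i ∈ Icc 1 (m - 1), γ i * γ (i + 1) * M ^ (2 * i + 1) := by
    rw [hsub (k := m - 1) (fun i hi => ?_) (Nat.sub_le m 1)]
    · refine sum_congr rfl fun i hi => ?_
      simp only [mem_Icc] at hi
      rw [hx i (by simp only [mem_Icc]; omega), hx (i + 1) (by simp only [mem_Icc]; omega)]
      ring
    · simp only [mem_Icc] at hi
      by_cases h : i = 0
      · rw [hx' i (by simp only [mem_Icc]; omega), zero_mul]
      · rw [hx' (i + 1) (by simp only [mem_Icc]; omega), mul_zero]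
  have hQ : ∑ i ∈ range (m + 1), x i ^ 2 = ∑ i ∈ Icc 1 m, γ i ^ 2 * M ^ (2 * i) := by
    rw [hsub (k := m) (fun i hi => by rw [hx' i hi, zero_pow two_ne_zero]) le_rfl]
    exact sum_congr rfl fun i hi => by rw [hx i hi]; ring
  have hD : ∑ i ∈ range (m + 1), x i * M ^ i = gainDenominator M m γ := by
    rw [hsub (k := m) (fun i hi => by rw [hx' i hi, zero_mul]) le_rfl]
    exact sum_congr rfl fun i hi => by rw [hx i hi]; ring
  have hx0 : ∀ i, 0 ≤ x i := fun i => by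
    by_cases hi : i ∈ Icc 1 m
    · rw [hx i hi]; exact mul_nonneg (hγ i hi).1 (by positivity)
    · rw [hx' i hi]
  have hxM : ∀ i, x i ≤ M ^ i := fun i => by
    by_cases hi : i ∈ Icc 1 m
    · rw [hx i hi]; exact mul_le_of_le_one_left (by positivity) (hγ i hi).2
    · rw [hx' i hi]; positivity
  have key := quadForm_le_of_mem_box hM hc B (m + 1) hx0 hxM
    (fun i hi => hx' i (by simp only [mem_Icc]; omega))
  rw [hE, hQ, hD] at key
  rw [gainNumerator]
  linarith

-- Small `M`: quadratic-form certificates found numerically.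
lemma gainNumerator_two_le {γ : ℕ → ℝ} (hγ : ∀ i ∈ Icc 1 4, 0 ≤ γ i ∧ γ i ≤ 1) :
    gainNumerator 2 2 4 γ ≤ 7 / 10 * gainDenominator 2 4 γ := by
  have hb : ∀ i ∈ Icc 1 4, 0 ≤ γ i * (1 - γ i) := fun i hi =>
    mul_nonneg (hγ i hi).1 (sub_nonneg.2 (hγ i hi).2)
  simp only [gainNumerator, gainDenominator, show Icc 1 (4 - 1) = {1, 2, 3} by decide,
    show Icc 1 4 = {1, 2, 3, 4} by decide]
  norm_num
  nlinarith [sq_nonneg (17 * γ 1 - 20 * γ 2), sq_nonneg (5 * γ 2 - 9 * γ 3),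
    sq_nonneg (2 * γ 3 - 5 * γ 4), hb 1 (by decide), hb 2 (by decide), hb 3 (by decide),
    hb 4 (by decide)]

lemma gainNumerator_three_le {γ : ℕ → ℝ} (hγ : ∀ i ∈ Icc 1 6, 0 ≤ γ i ∧ γ i ≤ 1) :
    gainNumerator 3 (5 / 3) 6 γ ≤ 101 / 200 * gainDenominator 3 6 γ := by
  have hb : ∀ i ∈ Icc 1 6, 0 ≤ γ i * (1 - γ i) := fun i hi =>
    mul_nonneg (hγ i hi).1 (sub_nonneg.2 (hγ i hi).2)
  simp only [gainNumerator, gainDenominator, show Icc 1 (6 - 1) = {1, 2, 3, 4, 5} by decide,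
    show Icc 1 6 = {1, 2, 3, 4, 5, 6} by decide]
  norm_num
  nlinarith [sq_nonneg (3 * γ 1 - 5 * γ 2), sq_nonneg (5 * γ 2 - 12 * γ 3),
    sq_nonneg (γ 3 - 3 * γ 4), sq_nonneg (4 * γ 4 - 15 * γ 5), sq_nonneg (37 * γ 5 - 200 * γ 6),
    hb 1 (by decide), hb 2 (by decide), hb 3 (by decide), hb 4 (by decide), hb 5 (by decide),
    hb 6 (by decide)]

lemma lt_one_div_rpow_sqrt_div_four {M S x : ℝ} {p q : ℕ} (hM : 1 ≤ M) (hS : 0 ≤ S) (hq : q ≠ 0)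
    (hx : x ≤ (4 * p / q) ^ 2) (h : S ^ q * M ^ p < 1) : S < 1 / M ^ (√x / 4) := by
  have hM0 : 0 < M := by linarith
  have hexp : √x / 4 ≤ p / q := by
    have := Real.sqrt_le_sqrt hx
    rw [Real.sqrt_sq (by positivity), mul_div_assoc] at this
    linarith
  have hy : (M ^ ((p : ℝ) / q)) ^ q = M ^ p := by
    rw [← Real.rpow_natCast, ← Real.rpow_mul hM0.le, div_mul_cancel₀ _ (by exact_mod_cast hq),
      Real.rpow_natCast]
  have hSy : S * M ^ ((p : ℝ) / q) < 1 := by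
    rw [← pow_lt_one_iff_of_nonneg (by positivity) hq, mul_pow, hy]
    exact h
  calc S < 1 / M ^ ((p : ℝ) / q) := by rw [lt_div_iff₀ (by positivity)]; exact hSy
    _ ≤ 1 / M ^ (√x / 4) := by gcongr

lemma gainBound_one_lt_of_le_nine {M : ℕ} (h4 : 4 ≤ M) (h9 : M ≤ 9) :
    gainBound M (1 + 2 * (1 / M)) 1 < 1 / (M : ℝ) ^ (√(2 * M : ℕ) / 4) := by
  have hS : 0 ≤ gainBound M (1 + 2 * (1 / M)) 1 := by
    have : (4 : ℝ) ≤ M := by exact_mod_cast h4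
    have : (0 : ℝ) < (M : ℝ) ^ 2 - 1 := by nlinarith
    unfold gainBound; positivity
  interval_cases M
  · exact lt_one_div_rpow_sqrt_div_four (p := 3) (q := 4) (by norm_num) hS
      (by norm_num) (by norm_num) (by norm_num [gainBound])
  · exact lt_one_div_rpow_sqrt_div_four (p := 1) (q := 1) (by norm_num) hS
      (by norm_num) (by norm_num) (by norm_num [gainBound])
  · exact lt_one_div_rpow_sqrt_div_four (p := 1) (q := 1) (by norm_num) hS
      (by norm_num) (by norm_num) (by norm_num [gainBound])
  · exact lt_one_div_rpow_sqrt_div_four (p := 1) (q := 1) (by norm_num) hS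
      (by norm_num) (by norm_num) (by norm_num [gainBound])
  · exact lt_one_div_rpow_sqrt_div_four (p := 1) (q := 1) (by norm_num) hS
      (by norm_num) (by norm_num) (by norm_num [gainBound])
  · exact lt_one_div_rpow_sqrt_div_four (p := 5) (q := 4) (by norm_num) hS
      (by norm_num) (by norm_num) (by norm_num [gainBound])

lemma exists_window_radius {M : ℕ} (hM : 10 ≤ M) :
    ∃ B : ℕ, 2 * ((B + 1) * (B + 2)) ≤ M + 2 ∧ M ≤ 32 * B ^ 2 := by
  have hex : ∃ B : ℕ, M + 2 < 2 * ((B + 2) * (B + 3)) := ⟨M, by nlinarith⟩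
  obtain ⟨B, hB⟩ : ∃ B, Nat.find hex = B + 1 := by
    refine Nat.exists_eq_add_one.2 (Nat.pos_of_ne_zero fun h => ?_)
    have := Nat.find_spec hex
    rw [h] at this
    omega
  have hspec := Nat.find_spec hex
  have hmin := Nat.find_min hex (show B < Nat.find hex by omega)
  rw [hB] at hspec
  exact ⟨B + 1, by linarith [not_lt.1 hmin], by nlinarith⟩

lemma exists_gainBound_lt {M : ℕ} (hM : 10 ≤ M) :
    ∃ B : ℕ, gainBound M (1 + 2 * (1 / M)) B < 1 / (M : ℝ) ^ (√(2 * M : ℕ) / 4) := by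
  obtain ⟨B, hBM, hMB⟩ := exists_window_radius hM
  have hM' : (10 : ℝ) ≤ M := by exact_mod_cast hM
  have hBM' : 2 * (((B : ℝ) + 1) * (B + 2)) ≤ M + 2 := by exact_mod_cast hBM
  have hM2 : (0 : ℝ) < (M : ℝ) ^ 2 - 1 := by nlinarith
  have hκ : (1 + 2 * (1 / (M : ℝ))) * (1 - 1 / ((B + 1) * (B + 2))) - 1 ≤ 0 := by
    rw [sub_nonpos]
    field_simp
    nlinarith
  refine ⟨B, lt_one_div_rpow_sqrt_div_four (p := 2 * B) (q := 1) (by linarith) ?_ one_ne_zero ?_ ?_⟩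
  · unfold gainBound; positivity
  · have : (M : ℝ) ≤ 32 * B ^ 2 := by exact_mod_cast hMB
    push_cast
    nlinarith
  · rw [gainBound, max_eq_right hκ, add_zero, pow_one, div_mul_eq_mul_div,
      div_lt_one (by positivity)]
    field_simp
    nlinarith

/-- The key estimate showing the eigenvalue relaxation for GainRatio is exponentially
weak: for `γ_i ∈ [0,1]` not all zero, `M ≥ 2`, `ε = 1/M` and `m = 2/ε = 2M`,
`(-∑_{i=1}^m γ_i² M^{2i} + (1+2ε) ∑_{i=1}^{m-1} γ_i γ_{i+1} M^{2i+1}) / (∑_{i=1}^m γ_i M^{2i})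
  < 1/M^{√m/4}`. -/
theorem stmt12 (M m : ℕ) (hM : 2 ≤ M) (ε : ℝ) (hε : ε = 1 / (M : ℝ))
    (hm : (m : ℝ) = 2 / ε) (γ : ℕ → ℝ)
    (hγ : ∀ i ∈ Finset.Icc 1 m, 0 ≤ γ i ∧ γ i ≤ 1)
    (hne : ∃ i ∈ Finset.Icc 1 m, γ i ≠ 0) :
    (-(∑ i ∈ Finset.Icc 1 m, (γ i)^2 * (M : ℝ)^(2*i)) +
        (1 + 2*ε) * ∑ i ∈ Finset.Icc 1 (m-1), γ i * γ (i+1) * (M : ℝ)^(2*i+1)) /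
      (∑ i ∈ Finset.Icc 1 m, γ i * (M : ℝ)^(2*i))
    < 1 / (M : ℝ) ^ (Real.sqrt m / 4) := by
  subst hε
  obtain rfl : m = 2 * M := by
    have : (m : ℝ) = 2 * M := by rw [hm, div_div_eq_mul_div, div_one]
    exact_mod_cast this
  have hD : 0 < gainDenominator M (2 * M) γ := by
    obtain ⟨j, hj, hj0⟩ := hne
    exact sum_pos' (fun i hi => mul_nonneg (hγ i hi).1 (by positivity))
      ⟨j, hj, mul_pos ((hγ j hj).1.lt_of_ne' hj0) (by positivity)⟩
  suffices ∃ S, gainNumerator M (1 + 2 * (1 / M)) (2 * M) γ ≤ S * gainDenominator M (2 * M) γ ∧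
      S < 1 / (M : ℝ) ^ (√(2 * M : ℕ) / 4) by
    obtain ⟨S, hS, hSlt⟩ := this
    exact ((div_le_iff₀ hD).2 hS).trans_lt hSlt
  have hM1 : (1 : ℝ) < M := by exact_mod_cast hM
  have hc : (0 : ℝ) ≤ 1 + 2 * (1 / M) := by positivity
  obtain rfl | rfl | hM4 : M = 2 ∨ M = 3 ∨ 4 ≤ M := by omega
  · refine ⟨7 / 10, by convert gainNumerator_two_le hγ using 2 <;> norm_num, ?_⟩
    exact lt_one_div_rpow_sqrt_div_four (p := 1) (q := 2) (by norm_num) (by norm_num)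
      (by norm_num) (by norm_num) (by norm_num)
  · refine ⟨101 / 200, by convert gainNumerator_three_le hγ using 2 <;> norm_num, ?_⟩
    exact lt_one_div_rpow_sqrt_div_four (p := 31) (q := 50) (by norm_num) (by norm_num)
      (by norm_num) (by norm_num) (by norm_num)
  · rcases le_or_gt M 9 with h9 | h10
    · exact ⟨_, gainNumerator_le hM1 hc 1 hγ, gainBound_one_lt_of_le_nine hM4 h9⟩
    · obtain ⟨B, hB⟩ := exists_gainBound_lt h10
      exact ⟨_, gainNumerator_le hM1 hc B hγ, hB⟩
end

section
/- Let x_1, ..., x_n be real numbers and suppose n >= 4. For any interval I of indices, - sum_{i in I} x_i^2 + (1 + 2/n) * sum_{i, i+1 in I} x_i x_{i+1} <= 0, provided |I| <= sqrt(n). -/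
/-!
Write `k + 1` for the length of the interval. Weighting the edge terms of the path by the discrete
parabola `w j = (j + 1) (k + 1 - j)`, which vanishes at `j = -1` and `j = k + 1` and has second
difference `-2`, the weighted AM-GM inequality
`2 y_j y_{j+1} ≤ (w_{j+1} / w_j) y_j² + (w_j / w_{j+1}) y_{j+1}²` sums to
`∑ y_j y_{j+1} ≤ ∑ (1 - 1 / w_j) y_j² ≤ (1 - 4 / (k + 2)²) ∑ y_j²`, because `w_j ≤ (k + 2)² / 4`.
When `(k + 1)² ≤ n` the factor `1 + 2 / n` does not undo this loss.
-/

open Finset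

lemma sum_range_mul_succ_le_sum_weighted_sq (k : ℕ) (y : ℕ → ℝ) :
    ∑ j ∈ range k, y j * y (j + 1) ≤
      ∑ j ∈ range (k + 1), (1 - 1 / (((j : ℝ) + 1) * (k + 1 - j))) * y j ^ 2 := by
  set w : ℕ → ℝ := fun j => ((j : ℝ) + 1) * (k + 1 - j) with hw
  have hpos : ∀ j ≤ k, 0 < w j := fun j hj => by
    have : (j : ℝ) ≤ k := by exact_mod_cast hj
    simp only [hw]; nlinarith
  have hlast : w (k + 1) = 0 := by simp only [hw]; push_cast; ring
  have hsecond : ∀ j, w j + w (j + 2) = 2 * w (j + 1) - 2 := fun j => by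
    simp only [hw]; push_cast; ring
  -- The extra term on the left is the share of `y m ^ 2` that the edge `(m, m + 1)` will claim.
  suffices h : ∀ m ≤ k, ∑ j ∈ range m, y j * y (j + 1) + w (m + 1) / (2 * w m) * y m ^ 2 ≤
      ∑ j ∈ range (m + 1), (1 - 1 / w j) * y j ^ 2 by
    simpa only [hlast, zero_div, zero_mul, add_zero] using h k le_rfl
  intro m hm
  induction m with
  | zero =>
    have hw0 : w 0 = k + 1 := by simp [hw]
    have hw1 : w 1 = 2 * k := by simp only [hw]; push_cast; ring
    have : w 1 / (2 * w 0) = 1 - 1 / w 0 := by rw [hw0, hw1]; field_simp; ring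
    simp [this]
  | succ m ih =>
    have hm0 := hpos m (by omega)
    have hm1 := hpos (m + 1) hm
    have weighted_amgm : y m * y (m + 1) ≤
        w (m + 1) / (2 * w m) * y m ^ 2 + w m / (2 * w (m + 1)) * y (m + 1) ^ 2 := by
      have hsq : 0 ≤ (w (m + 1) * y m - w m * y (m + 1)) ^ 2 / (2 * w m * w (m + 1)) := by
        positivity
      have e : (w (m + 1) * y m - w m * y (m + 1)) ^ 2 / (2 * w m * w (m + 1)) =
          w (m + 1) / (2 * w m) * y m ^ 2 + w m / (2 * w (m + 1)) * y (m + 1) ^ 2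
            - y m * y (m + 1) := by
        field_simp; ring
      linarith
    have coeff : w m / (2 * w (m + 1)) * y (m + 1) ^ 2 + w (m + 2) / (2 * w (m + 1)) * y (m + 1) ^ 2
        = (1 - 1 / w (m + 1)) * y (m + 1) ^ 2 := by
      have := hsecond m
      field_simp
      linear_combination y (m + 1) ^ 2 * this
    rw [sum_range_succ, sum_range_succ _ (m + 1)]
    linarith [ih (by omega)]

lemma one_sub_inv_parabola_le (k j : ℕ) (hj : j ≤ k) :
    1 - 1 / (((j : ℝ) + 1) * (k + 1 - j)) ≤ 1 - 4 / ((k : ℝ) + 2) ^ 2 := by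
  have : (j : ℝ) ≤ k := by exact_mod_cast hj
  have hpos : 0 < ((j : ℝ) + 1) * (k + 1 - j) := by nlinarith
  have hle : 4 * (((j : ℝ) + 1) * (k + 1 - j)) ≤ ((k : ℝ) + 2) ^ 2 := by
    nlinarith [sq_nonneg ((k : ℝ) - 2 * j)]
  rw [sub_le_sub_iff_left, div_le_div_iff₀ (by positivity) hpos]
  linarith

lemma sum_range_mul_succ_le (k : ℕ) (y : ℕ → ℝ) :
    ∑ j ∈ range k, y j * y (j + 1) ≤ (1 - 4 / ((k : ℝ) + 2) ^ 2) * ∑ j ∈ range (k + 1), y j ^ 2 := by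
  rw [mul_sum]
  refine (sum_range_mul_succ_le_sum_weighted_sq k y).trans (sum_le_sum fun j hj => ?_)
  exact mul_le_mul_of_nonneg_right
    (one_sub_inv_parabola_le k j (Nat.lt_succ_iff.mp (mem_range.mp hj))) (sq_nonneg _)

lemma one_add_two_div_mul_le_one {n k : ℕ} (hkn : ((k : ℝ) + 1) ^ 2 ≤ n) :
    (1 + 2 / (n : ℝ)) * (1 - 4 / ((k : ℝ) + 2) ^ 2) ≤ 1 := by
  have hn : (0 : ℝ) < n := lt_of_lt_of_le (by positivity) hkn
  have hk : (0 : ℝ) < ((k : ℝ) + 1) ^ 2 := by positivity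
  have hc : 0 ≤ 1 - 4 / ((k : ℝ) + 2) ^ 2 := by
    rw [sub_nonneg, div_le_one (by positivity)]
    nlinarith [(Nat.cast_nonneg k : (0 : ℝ) ≤ k)]
  calc (1 + 2 / (n : ℝ)) * (1 - 4 / ((k : ℝ) + 2) ^ 2)
      ≤ (1 + 2 / ((k : ℝ) + 1) ^ 2) * (1 - 4 / ((k : ℝ) + 2) ^ 2) := by gcongr
    _ ≤ 1 := by
      rw [one_add_div hk.ne', one_sub_div (by positivity), div_mul_div_comm,
        div_le_one (by positivity)]
      nlinarith [sq_nonneg ((k : ℝ) - 1)]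

lemma filter_add_one_mem_Icc (a b : ℕ) :
    (Icc a b).filter (fun i => i + 1 ∈ Icc a b) = Ico a b := by
  ext i
  simp only [mem_filter, mem_Icc, mem_Ico]
  omega

lemma sum_Icc_add_eq_sum_range {M : Type*} [AddCommMonoid M] (f : ℕ → M) (a k : ℕ) :
    ∑ i ∈ Icc a (a + k), f i = ∑ j ∈ range (k + 1), f (a + j) := by
  rw [← Ico_add_one_right_eq_Icc, sum_Ico_eq_sum_range]
  congr 2
  omega

theorem stmt13_general (n : ℕ) (x : ℕ → ℝ) (a b : ℕ)
    (hI : ((Finset.Icc a b).card : ℝ) ≤ Real.sqrt n) :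
    -(∑ i ∈ Finset.Icc a b, (x i)^2) +
      (1 + 2/(n:ℝ)) * ∑ i ∈ (Finset.Icc a b).filter (fun i => i + 1 ∈ Finset.Icc a b),
        x i * x (i+1) ≤ 0 := by
  obtain hba | ⟨k, rfl⟩ : b < a ∨ ∃ k, b = a + k :=
    (lt_or_ge b a).imp_right Nat.exists_eq_add_of_le
  · simp [Icc_eq_empty_of_lt hba]
  have hkn : ((k : ℝ) + 1) ^ 2 ≤ n := by
    rw [Nat.card_Icc, show a + k + 1 - a = k + 1 by omega, Real.le_sqrt' (by positivity)] at hI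
    exact_mod_cast hI
  rw [filter_add_one_mem_Icc, sum_Ico_eq_sum_range, add_tsub_cancel_left, sum_Icc_add_eq_sum_range]
  have hedge := sum_range_mul_succ_le k (fun j => x (a + j))
  simp only [← add_assoc] at hedge
  have hS : 0 ≤ ∑ j ∈ range (k + 1), x (a + j) ^ 2 := by positivity
  have hc : 0 ≤ 1 + 2 / (n : ℝ) := by positivity
  have hcoef := mul_le_of_le_one_left hS (one_add_two_div_mul_le_one hkn)
  rw [mul_assoc] at hcoef
  linarith [mul_le_mul_of_nonneg_left hedge hc]

/-- For an interval `I = [a,b]` of indices with `|I| ≤ √n` (and `n ≥ 4`),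
`-∑_{i∈I} x_i² + (1 + 2/n) ∑_{i,i+1∈I} x_i x_{i+1} ≤ 0`. -/
theorem stmt13 (n : ℕ) (hn : 4 ≤ n) (x : ℕ → ℝ) (a b : ℕ)
    (hI : ((Finset.Icc a b).card : ℝ) ≤ Real.sqrt n) :
    -(∑ i ∈ Finset.Icc a b, (x i)^2) +
      (1 + 2/(n:ℝ)) * ∑ i ∈ (Finset.Icc a b).filter (fun i => i + 1 ∈ Finset.Icc a b),
        x i * x (i+1) ≤ 0 :=
  stmt13_general n x a b hI
end

section
/- Let v_1, ..., v_n be vectors in a real inner product space satisfying |<v_i, v_j>| <= v_j^2 (squared norm) for all i, j, and sum_i ||v_i||^2 <= 2. Let A be an n x n matrix with |A_{ij}| <= B for all i,j, and suppose sum_{i,j} A_{ij} <v_i, v_j> >= B * n^rho. Then the set S of indices i with ||v_i||^2 <= 16/n^rho satisfies sum_{i,j in S} A_{ij} <v_i, v_j> >= B * n^rho / 2. -/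
/-!
Split the double sum according to whether `i` and `j` are short (`‖v_i‖² ≤ 16/n^ρ`). Since
`|A_{ij}⟪v_i,v_j⟫| ≤ B‖v_j‖²` and also `≤ B‖v_i‖²`, every row and every column of the matrix
`A_{ij}⟪v_i,v_j⟫` has absolute sum at most `2B`. By Markov's inequality there are at most
`n^ρ/8` long indices, so the terms with a long row or a long column index sum to at most
`2 · (n^ρ/8) · 2B = B n^ρ/2`.
-/

open Finset RealInnerProductSpace

theorem card_filter_lt_mul_le_sum {ι : Type*} {s : Finset ι} {f : ι → ℝ}
    (hf : ∀ i ∈ s, 0 ≤ f i) (t : ℝ) : #{i ∈ s | t < f i} * t ≤ ∑ i ∈ s, f i := by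
  calc #{i ∈ s | t < f i} * t ≤ ∑ i ∈ s with t < f i, f i := by
        simpa using card_nsmul_le_sum _ f t fun i hi => (mem_filter.mp hi).2.le
    _ ≤ ∑ i ∈ s, f i := sum_le_sum_of_subset_of_nonneg (filter_subset _ _) fun i hi _ => hf i hi

section DoubleSum

variable {ι : Type*} [Fintype ι]

theorem sum_sum_le_sum_filter_add_sum_abs (W : ι → ι → ℝ) (p : ι → Prop) [DecidablePred p] :
    ∑ i, ∑ j, W i j ≤
      ∑ i with p i, ∑ j with p j, W i j + ∑ i with ¬p i, ∑ j, |W i j| +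
        ∑ j with ¬p j, ∑ i, |W i j| := by
  have hW : ∀ i j, W i j ≤ |W i j| := fun i j => le_abs_self _
  have hsplit : ∑ i with p i, ∑ j, W i j =
      ∑ i with p i, ∑ j with p j, W i j + ∑ i with p i, ∑ j with ¬p j, W i j := by
    rw [← sum_add_distrib]
    exact sum_congr rfl fun i _ => (sum_filter_add_sum_filter_not univ p _).symm
  have hlongCol : ∑ i with p i, ∑ j with ¬p j, W i j ≤ ∑ j with ¬p j, ∑ i, |W i j| := by
    rw [sum_comm]
    gcongr with j
    exact (sum_le_sum fun i _ => hW i j).trans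
      (sum_le_sum_of_subset_of_nonneg (subset_univ _) fun i _ _ => abs_nonneg _)
  have hlongRow : ∑ i with ¬p i, ∑ j, W i j ≤ ∑ i with ¬p i, ∑ j, |W i j| := by
    gcongr with i _ j
    exact hW i j
  rw [← sum_filter_add_sum_filter_not univ p]
  linarith

theorem sum_abs_mul_le {a x w : ι → ℝ} {B : ℝ} (hB : 0 ≤ B) (ha : ∀ j, |a j| ≤ B)
    (hx : ∀ j, |x j| ≤ w j) : ∑ j, |a j * x j| ≤ B * ∑ j, w j := by
  rw [mul_sum]
  gcongr with j
  rw [abs_mul]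
  exact mul_le_mul (ha j) (hx j) (abs_nonneg _) hB

end DoubleSum

/-- Discarding long vectors keeps half the SDP value: if `|⟪v_i,v_j⟫| ≤ ‖v_j‖²`,
`∑‖v_i‖² ≤ 2`, `|A_{ij}| ≤ B` and `∑ A_{ij}⟪v_i,v_j⟫ ≥ B n^ρ`, then the indices with
`‖v_i‖² ≤ 16/n^ρ` retain at least `B n^ρ / 2` of the value. -/
theorem stmt14 {E : Type*} [NormedAddCommGroup E] [InnerProductSpace ℝ E]
    (n : ℕ) (ρ : ℝ) (hρ : 0 < ρ) (v : Fin n → E)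
    (hineq : ∀ i j, |⟪v i, v j⟫| ≤ ‖v j‖^2)
    (hsum : ∑ i, ‖v i‖^2 ≤ 2)
    (B : ℝ) (A : Matrix (Fin n) (Fin n) ℝ) (hA : ∀ i j, |A i j| ≤ B)
    (hval : B * (n : ℝ) ^ ρ ≤ ∑ i, ∑ j, A i j * ⟪v i, v j⟫) :
    B * (n : ℝ) ^ ρ / 2 ≤
      ∑ i ∈ Finset.univ.filter (fun i => ‖v i‖^2 ≤ 16 / (n : ℝ) ^ ρ),
        ∑ j ∈ Finset.univ.filter (fun j => ‖v j‖^2 ≤ 16 / (n : ℝ) ^ ρ),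
          A i j * ⟪v i, v j⟫ := by
  obtain rfl | hn := Nat.eq_zero_or_pos n
  · simp [Real.zero_rpow hρ.ne']
  have hB : 0 ≤ B := (abs_nonneg _).trans (hA ⟨0, hn⟩ ⟨0, hn⟩)
  set N := (n : ℝ) ^ ρ
  have hN : 0 < N := by positivity
  have hmass : B * ∑ i, ‖v i‖^2 ≤ 2 * B := by nlinarith
  have hrow : ∀ i, ∑ j, |A i j * ⟪v i, v j⟫| ≤ 2 * B := fun i =>
    (sum_abs_mul_le hB (hA i) (hineq i)).trans hmass
  have hcol : ∀ j, ∑ i, |A i j * ⟪v i, v j⟫| ≤ 2 * B := fun j =>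
    (sum_abs_mul_le hB (hA · j) fun i => real_inner_comm (v i) (v j) ▸ hineq j i).trans hmass
  set T : Finset (Fin n) := {i | 16 / N < ‖v i‖^2}
  have hlong : #T * (16 / N) ≤ 2 :=
    (card_filter_lt_mul_le_sum (fun i _ => sq_nonneg ‖v i‖) _).trans hsum
  have hlong' : #T * B * 16 ≤ 2 * B * N := by
    rw [mul_div_assoc', div_le_iff₀ hN] at hlong
    nlinarith
  have hsplit := sum_sum_le_sum_filter_add_sum_abs (fun i j => A i j * ⟪v i, v j⟫)
    fun i => ‖v i‖^2 ≤ 16 / N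
  simp only [not_le] at hsplit
  have hrows := sum_le_card_nsmul _ _ _ fun i (_ : i ∈ T) => hrow i
  have hcols := sum_le_card_nsmul _ _ _ fun j (_ : j ∈ T) => hcol j
  simp only [nsmul_eq_mul] at hrows hcols
  linarith
end

section
/- Let v_1, ..., v_n be nonzero vectors in a real inner product space with tau/Delta <= ||v_i||^2 <= tau for all i, where tau > 0 and Delta > 1. Let A be a real n x n matrix with zero diagonal. Define w_i = v_i/||v_i|| independently with probability ||v_i||/sqrt(tau), and w_i = 0 otherwise. Then E[sum_{i,j} A_{ij} <w_i, w_j>] / E[sum_i ||w_i||^2] >= (1/sqrt(Delta)) * (sum_{i,j} A_{ij} <v_i, v_j>) / (sum_i ||v_i||^2), assuming sum_{i,j} A_{ij} <v_i, v_j> > 0. -/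
/-!
Choosing `i` with probability `p i = ‖v i‖ / √τ`, independence gives
`E[∑ A i j ⟪w i, w j⟫] = ∑ A i j p i p j ⟪v i, v j⟫ / (‖v i‖ ‖v j‖) = (∑ A i j ⟪v i, v j⟫) / τ`
(the zero diagonal removes the terms in which one choice occurs twice), and
`E[∑ ‖w i‖²] = ∑ ‖v i‖ / √τ`. Since `‖v i‖ ≥ √(τ / Δ)`, we have `‖v i‖ ≤ √(Δ / τ) ‖v i‖²`,
so the second expectation is at most `√Δ ∑ ‖v i‖² / τ`.
-/

open Finset RealInnerProductSpace

section ProductBernoulli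

variable {ι : Type*} [Fintype ι] [DecidableEq ι]

def bernoulliWeight (p : ι → ℝ) (S : Finset ι) : ℝ :=
  (∏ i ∈ S, p i) * ∏ i ∈ Sᶜ, (1 - p i)

theorem sum_bernoulliWeight_filter_subset (p : ι → ℝ) (T : Finset ι) :
    ∑ S with T ⊆ S, bernoulliWeight p S = ∏ i ∈ T, p i := by
  -- requiring `T ⊆ S` amounts to replacing the factors `1 - p i`, `i ∈ T`, by `0`
  have hweight : ∀ S : Finset ι, (if T ⊆ S then bernoulliWeight p S else 0) =
      (∏ i ∈ S, p i) * ∏ i ∈ Sᶜ, (if i ∈ T then 0 else 1 - p i) := by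
    intro S
    split_ifs with hTS
    · refine congrArg _ (prod_congr rfl fun i hi => ?_)
      rw [if_neg fun hiT => mem_compl.mp hi (hTS hiT)]
    · obtain ⟨i, hiT, hiS⟩ := Finset.not_subset.mp hTS
      rw [Finset.prod_eq_zero (mem_compl.mpr hiS) (by rw [if_pos hiT]), mul_zero]
  calc ∑ S with T ⊆ S, bernoulliWeight p S
      = ∏ i, (p i + if i ∈ T then 0 else 1 - p i) := by
        rw [sum_filter, Fintype.prod_add]
        exact sum_congr rfl fun S _ => hweight S
    _ = ∏ i, (if i ∈ T then p i else 1) :=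
        prod_congr rfl fun i _ => by split_ifs <;> ring
    _ = ∏ i ∈ T, p i := by rw [prod_ite_mem, univ_inter]

theorem sum_bernoulliWeight_filter_mem (p : ι → ℝ) (i : ι) :
    ∑ S with i ∈ S, bernoulliWeight p S = p i := by
  simpa using sum_bernoulliWeight_filter_subset p {i}

theorem sum_bernoulliWeight_filter_mem_and_mem (p : ι → ℝ) {i j : ι} (hij : i ≠ j) :
    ∑ S with i ∈ S ∧ j ∈ S, bernoulliWeight p S = p i * p j := by
  simpa [insert_subset_iff, prod_pair hij] using sum_bernoulliWeight_filter_subset p {i, j}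

variable {E : Type*} [NormedAddCommGroup E]

theorem sum_bernoulliWeight_mul_sum_norm_sq (p : ι → ℝ) (u : ι → E) :
    ∑ S, bernoulliWeight p S * ∑ i, ‖(if i ∈ S then u i else 0)‖ ^ 2 =
      ∑ i, p i * ‖u i‖ ^ 2 := by
  simp_rw [mul_sum]
  rw [sum_comm]
  refine sum_congr rfl fun i _ => ?_
  rw [← sum_bernoulliWeight_filter_mem p i, sum_filter, sum_mul]
  exact sum_congr rfl fun S _ => by split_ifs <;> simp

variable [InnerProductSpace ℝ E]

theorem sum_bernoulliWeight_mul_quadForm (p : ι → ℝ) (A : Matrix ι ι ℝ)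
    (hdiag : ∀ i, A i i = 0) (u : ι → E) :
    ∑ S, bernoulliWeight p S *
        ∑ i, ∑ j, A i j * ⟪(if i ∈ S then u i else 0), (if j ∈ S then u j else 0)⟫ =
      ∑ i, ∑ j, A i j * (p i * p j * ⟪u i, u j⟫) := by
  simp_rw [mul_sum]
  rw [sum_comm]
  refine sum_congr rfl fun i _ => ?_
  rw [sum_comm]
  refine sum_congr rfl fun j _ => ?_
  rcases eq_or_ne i j with rfl | hij
  · simp [hdiag]
  rw [← sum_bernoulliWeight_filter_mem_and_mem p hij, sum_filter, sum_mul, mul_sum]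
  refine sum_congr rfl fun S _ => ?_
  by_cases hi : i ∈ S <;> by_cases hj : j ∈ S <;> simp [hi, hj]; ring

end ProductBernoulli

theorem norm_div_mul_norm_div_mul_inner_inv_norm_smul {E : Type*} [NormedAddCommGroup E]
    [InnerProductSpace ℝ E] {x y : E} (hx : x ≠ 0) (hy : y ≠ 0) (c : ℝ) :
    ‖x‖ / c * (‖y‖ / c) * ⟪‖x‖⁻¹ • x, ‖y‖⁻¹ • y⟫ = ⟪x, y⟫ / c ^ 2 := by
  have := norm_ne_zero_iff.mpr hx
  have := norm_ne_zero_iff.mpr hy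
  rw [real_inner_smul_left, real_inner_smul_right]
  field_simp

theorem div_sqrt_le_sqrt_mul_sq_div {τ Δ x : ℝ} (hτ : 0 < τ) (hΔ : 0 < Δ) (hx : 0 ≤ x)
    (hlb : τ / Δ ≤ x ^ 2) : x / Real.sqrt τ ≤ Real.sqrt Δ * x ^ 2 / τ := by
  have hsqrt : Real.sqrt τ ≤ Real.sqrt Δ * x := by
    have := (Real.sqrt_le_left hx).mpr hlb
    rwa [Real.sqrt_div hτ.le, div_le_iff₀' (Real.sqrt_pos.mpr hΔ)] at this
  calc x / Real.sqrt τ = x * Real.sqrt τ / τ := by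
        field_simp
        rw [Real.sq_sqrt hτ.le]
    _ ≤ Real.sqrt Δ * x ^ 2 / τ := by
        refine div_le_div_of_nonneg_right ?_ hτ.le
        nlinarith [mul_le_mul_of_nonneg_left hsqrt hx]

theorem stmt15_general {E : Type*} [NormedAddCommGroup E] [InnerProductSpace ℝ E]
    (n : ℕ) (τ Δ : ℝ) (hτ : 0 < τ) (hΔ : 1 < Δ)
    (v : Fin n → E) (hv0 : ∀ i, v i ≠ 0)
    (hlb : ∀ i, τ / Δ ≤ ‖v i‖^2)
    (A : Matrix (Fin n) (Fin n) ℝ) (hdiag : ∀ i, A i i = 0)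
    (hpos : 0 < ∑ i, ∑ j, A i j * ⟪v i, v j⟫) :
    (1 / Real.sqrt Δ) * (∑ i, ∑ j, A i j * ⟪v i, v j⟫) / (∑ i, ‖v i‖^2) ≤
      (∑ S : Finset (Fin n),
          ((∏ i ∈ S, ‖v i‖ / Real.sqrt τ) * ∏ i ∈ Sᶜ, (1 - ‖v i‖ / Real.sqrt τ)) *
            ∑ i, ∑ j, A i j *
              ⟪(if i ∈ S then ‖v i‖⁻¹ • v i else 0), (if j ∈ S then ‖v j‖⁻¹ • v j else 0)⟫) /
      (∑ S : Finset (Fin n),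
          ((∏ i ∈ S, ‖v i‖ / Real.sqrt τ) * ∏ i ∈ Sᶜ, (1 - ‖v i‖ / Real.sqrt τ)) *
            ∑ i, ‖(if i ∈ S then ‖v i‖⁻¹ • v i else (0:E))‖^2) := by
  have hnum := sum_bernoulliWeight_mul_quadForm (fun i => ‖v i‖ / Real.sqrt τ) A hdiag
    (fun i => ‖v i‖⁻¹ • v i)
  have hden := sum_bernoulliWeight_mul_sum_norm_sq (fun i => ‖v i‖ / Real.sqrt τ)
    (fun i => ‖v i‖⁻¹ • v i)
  simp only [bernoulliWeight] at hnum hden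
  rw [hnum, hden]
  have hnv : ∀ i, 0 < ‖v i‖ := fun i => norm_pos_iff.mpr (hv0 i)
  have hunit : ∀ i, ‖v i‖ / Real.sqrt τ * ‖‖v i‖⁻¹ • v i‖ ^ 2 = ‖v i‖ / Real.sqrt τ :=
    fun i => by rw [norm_smul, norm_inv, norm_norm, inv_mul_cancel₀ (hnv i).ne', one_pow, mul_one]
  simp only [norm_div_mul_norm_div_mul_inner_inv_norm_smul (hv0 _) (hv0 _), Real.sq_sqrt hτ.le,
    hunit]
  simp only [mul_div_assoc', ← sum_div]
  have hne : (univ : Finset (Fin n)).Nonempty := nonempty_of_sum_ne_zero hpos.ne'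
  have hsum : (∑ i, ‖v i‖) / Real.sqrt τ ≤ Real.sqrt Δ * (∑ i, ‖v i‖ ^ 2) / τ := by
    rw [mul_sum, sum_div, sum_div]
    exact sum_le_sum fun i _ =>
      div_sqrt_le_sqrt_mul_sq_div hτ (by linarith) (hnv i).le (hlb i)
  calc 1 / Real.sqrt Δ * (∑ i, ∑ j, A i j * ⟪v i, v j⟫) / ∑ i, ‖v i‖ ^ 2
      = (∑ i, ∑ j, A i j * ⟪v i, v j⟫) / τ / (Real.sqrt Δ * (∑ i, ‖v i‖ ^ 2) / τ) := by
        field_simp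
    _ ≤ _ := div_le_div_of_nonneg_left (by positivity)
        (div_pos (sum_pos (fun i _ => hnv i) hne) (Real.sqrt_pos.mpr hτ)) hsum

/-- Randomized rounding for roughly-equal-length vectors: pick `w_i = v_i/‖v_i‖`
independently with probability `‖v_i‖/√τ` (and `w_i = 0` otherwise).  The expectation
is modelled as a sum over the subset `S` of chosen indices, with probability
`(∏_{i∈S} p_i)(∏_{i∉S}(1-p_i))`.  Then the ratio of expectations is at least
`(1/√Δ)` times the original SDP ratio. -/
theorem stmt15 {E : Type*} [NormedAddCommGroup E] [InnerProductSpace ℝ E]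
    (n : ℕ) (τ Δ : ℝ) (hτ : 0 < τ) (hΔ : 1 < Δ)
    (v : Fin n → E) (hv0 : ∀ i, v i ≠ 0)
    (hlb : ∀ i, τ / Δ ≤ ‖v i‖^2) (hub : ∀ i, ‖v i‖^2 ≤ τ)
    (A : Matrix (Fin n) (Fin n) ℝ) (hdiag : ∀ i, A i i = 0)
    (hpos : 0 < ∑ i, ∑ j, A i j * ⟪v i, v j⟫) :
    (1 / Real.sqrt Δ) * (∑ i, ∑ j, A i j * ⟪v i, v j⟫) / (∑ i, ‖v i‖^2) ≤
      (∑ S : Finset (Fin n),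
          ((∏ i ∈ S, ‖v i‖ / Real.sqrt τ) * ∏ i ∈ Sᶜ, (1 - ‖v i‖ / Real.sqrt τ)) *
            ∑ i, ∑ j, A i j *
              ⟪(if i ∈ S then ‖v i‖⁻¹ • v i else 0), (if j ∈ S then ‖v j‖⁻¹ • v j else 0)⟫) /
      (∑ S : Finset (Fin n),
          ((∏ i ∈ S, ‖v i‖ / Real.sqrt τ) * ∏ i ∈ Sᶜ, (1 - ‖v i‖ / Real.sqrt τ)) *
            ∑ i, ‖(if i ∈ S then ‖v i‖⁻¹ • v i else (0:E))‖^2) :=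
  stmt15_general n τ Δ hτ hΔ v hv0 hlb A hdiag hpos
end
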